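/- Quadratic lower bound for the expected check loss near the quantile: let τ ∈ (0,1) and let e be an integrable real random variable whose law has a density f with respect to Lebesgue measure such that f is continuous at 0, f(0) > 0, and P(e < 0) = τ. Then there exist constants c > 0 and δ > 0 such that E[ρ_τ(e − t)] − E[ρ_τ(e)] ≥ c·t² for all t with |t| ≤ δ. -/

import Mathlib

open MeasureTheory

noncomputable def rho (τ s : ℝ) : ℝ := s * (τ - if s < 0 then 1 else 0)

/-!
Knight's identity splits `ρ_τ(x - t) - ρ_τ(x)` into `t (1{x < 0} - τ)`, whose expectation vanishes
because `P(e < 0) = τ`, and a nonnegative remainder which is at least `|t| / 2` on the open interval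
between `0` and `t / 2`. Near `0` the density is at least `f 0 / 2`, so that interval has mass at
least `f 0 / 2 * |t| / 2`, giving the bound with `c = f 0 / 8`.
-/

open Set

lemma rho_eq_mul_add_max_neg (τ s : ℝ) : rho τ s = τ * s + max (-s) 0 := by
  unfold rho
  split_ifs with h
  · rw [max_eq_left (by linarith)]; ring
  · rw [max_eq_right (by linarith)]; ring

/-- The remainder in Knight's identity
`ρ_τ(x - t) - ρ_τ(x) = t (1{x < 0} - τ) + ∫₀ᵗ (1{x ≤ s} - 1{x ≤ 0}) ds`, in closed form. -/
noncomputable def knightRemainder (t x : ℝ) : ℝ :=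
  max (t - x) 0 - max (-x) 0 - t * (Iio 0).indicator 1 x

lemma rho_sub_sub_rho (τ t x : ℝ) :
    rho τ (x - t) - rho τ x = t * ((Iio 0).indicator 1 x - τ) + knightRemainder t x := by
  rw [knightRemainder, rho_eq_mul_add_max_neg, rho_eq_mul_add_max_neg, neg_sub]; ring

lemma indicator_uIoo_le_knightRemainder (t x : ℝ) :
    (uIoo 0 (t / 2)).indicator (fun _ => |t| / 2) x ≤ knightRemainder t x := by
  unfold knightRemainder uIoo
  simp only [indicator_apply, mem_Ioo, mem_Iio, Pi.one_apply]
  split_ifs <;> cases abs_cases t <;> cases max_cases (t - x) 0 <;> cases max_cases (-x) 0 <;>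
    cases min_cases (0 : ℝ) (t / 2) <;> cases max_cases (0 : ℝ) (t / 2) <;> linarith

lemma abs_lt_abs_of_mem_uIoo_zero {x b : ℝ} (hx : x ∈ uIoo 0 b) : |x| < |b| := by
  obtain ⟨hlow, hhigh⟩ := hx
  cases min_cases (0 : ℝ) b <;> cases max_cases (0 : ℝ) b <;> cases abs_cases x <;>
    cases abs_cases b <;> linarith

lemma measurableSet_uIoo {α : Type*} [TopologicalSpace α] [MeasurableSpace α]
    [OpensMeasurableSpace α] [LinearOrder α] [OrderClosedTopology α] (a b : α) :
    MeasurableSet (uIoo a b) :=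
  measurableSet_Ioo

lemma volume_uIoo (a b : ℝ) : volume (uIoo a b) = ENNReal.ofReal |b - a| := by
  rw [uIoo, Real.volume_Ioo, max_sub_min_eq_abs]

lemma ofReal_mul_le_withDensity_apply {α : Type*} [MeasurableSpace α] (ν : Measure α)
    {f : α → ℝ} {s : Set α} {m : ℝ} (hs : MeasurableSet s) (hm : ∀ x ∈ s, m ≤ f x) :
    ENNReal.ofReal m * ν s ≤ ν.withDensity (fun x => ENNReal.ofReal (f x)) s := by
  rw [withDensity_apply _ hs, ← setLIntegral_const]
  exact setLIntegral_mono' hs fun x hx => ENNReal.ofReal_le_ofReal (hm x hx)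

section FiniteMeasure

variable {μ : Measure ℝ} [IsFiniteMeasure μ]

lemma mul_abs_le_measureReal_uIoo {f : ℝ → ℝ}
    (hμ : μ = volume.withDensity (fun x => ENNReal.ofReal (f x))) {a b m : ℝ} (hm0 : 0 ≤ m)
    (hm : ∀ x ∈ uIoo a b, m ≤ f x) : m * |b - a| ≤ μ.real (uIoo a b) := by
  have h := ofReal_mul_le_withDensity_apply volume (measurableSet_uIoo a b) hm
  rw [volume_uIoo, ← ENNReal.ofReal_mul hm0, ← hμ] at h
  exact (ENNReal.ofReal_le_iff_le_toReal (measure_ne_top _ _)).1 h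

lemma integrable_rho_comp_sub (hint : Integrable (fun x : ℝ => x) μ) (τ t : ℝ) :
    Integrable (fun x => rho τ (x - t)) μ := by
  simp_rw [rho_eq_mul_add_max_neg]
  exact ((hint.sub (integrable_const t)).const_mul τ).add
    (hint.sub (integrable_const t)).neg.pos_part

lemma integrable_knightRemainder (hint : Integrable (fun x : ℝ => x) μ) (t : ℝ) :
    Integrable (knightRemainder t) μ :=
  (((integrable_const t).sub hint).pos_part.sub hint.neg.pos_part).sub
    (((integrable_const 1).indicator measurableSet_Iio).const_mul t)

lemma integral_rho_sub_sub_integral_rho (hint : Integrable (fun x : ℝ => x) μ) (τ t : ℝ) :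
    (∫ x, rho τ (x - t) ∂μ) - ∫ x, rho τ x ∂μ
      = t * (μ.real (Iio 0) - μ.real univ * τ) + ∫ x, knightRemainder t x ∂μ := by
  have hrho : Integrable (fun x => rho τ x) μ := by
    simpa using integrable_rho_comp_sub hint τ 0
  have hone : Integrable ((Iio (0 : ℝ)).indicator (1 : ℝ → ℝ)) μ :=
    (integrable_const (1 : ℝ)).indicator measurableSet_Iio
  have hlinear : Integrable (fun x => t * ((Iio (0 : ℝ)).indicator 1 x - τ)) μ :=
    (hone.sub (integrable_const τ)).const_mul t
  rw [← integral_sub (integrable_rho_comp_sub hint τ t) hrho]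
  simp_rw [rho_sub_sub_rho]
  rw [integral_add hlinear (integrable_knightRemainder hint t), integral_const_mul,
    integral_sub hone (integrable_const τ), integral_indicator_one measurableSet_Iio,
    integral_const, smul_eq_mul]

lemma mul_measureReal_uIoo_le_integral_knightRemainder (hint : Integrable (fun x : ℝ => x) μ)
    (t : ℝ) :
    |t| / 2 * μ.real (uIoo 0 (t / 2)) ≤ ∫ x, knightRemainder t x ∂μ :=
  calc |t| / 2 * μ.real (uIoo 0 (t / 2))
      = ∫ x, (uIoo 0 (t / 2)).indicator (fun _ => |t| / 2) x ∂μ := by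
        rw [integral_indicator_const _ (measurableSet_uIoo _ _), smul_eq_mul, mul_comm]
    _ ≤ ∫ x, knightRemainder t x ∂μ :=
        integral_mono ((integrable_const _).indicator (measurableSet_uIoo _ _))
          (integrable_knightRemainder hint t) (indicator_uIoo_le_knightRemainder t)

end FiniteMeasure

theorem expected_check_loss_quadratic_lower_bound_general (τ : ℝ) (hτ : τ ∈ Set.Ioo (0:ℝ) 1)
    (μ : Measure ℝ) [IsProbabilityMeasure μ] (f : ℝ → ℝ)
    (hμ : μ = volume.withDensity (fun x => ENNReal.ofReal (f x)))
    (hf_cont : ContinuousAt f 0) (hf_pos : 0 < f 0)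
    (hint : Integrable (fun x : ℝ => x) μ)
    (hq : μ (Set.Iio 0) = ENNReal.ofReal τ) :
    ∃ c > (0:ℝ), ∃ δ > (0:ℝ), ∀ t : ℝ, |t| ≤ δ →
      c * t ^ 2 ≤ (∫ x, rho τ (x - t) ∂μ) - (∫ x, rho τ x ∂μ) := by
  obtain ⟨δ, hδ, hfδ⟩ : ∃ δ > 0, ∀ x, |x| < δ → f 0 / 2 ≤ f x := by
    obtain ⟨δ, hδ, h⟩ := Metric.eventually_nhds_iff.1
      (hf_cont.eventually (lt_mem_nhds (half_lt_self hf_pos)))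
    exact ⟨δ, hδ, fun x hx => (h (by rwa [Real.dist_0_eq_abs])).le⟩
  refine ⟨f 0 / 8, by positivity, δ, hδ, fun t ht => ?_⟩
  have hτμ : μ.real (Iio 0) = τ := by rw [measureReal_def, hq, ENNReal.toReal_ofReal hτ.1.le]
  have hmass : f 0 / 2 * |t / 2 - 0| ≤ μ.real (uIoo 0 (t / 2)) :=
    mul_abs_le_measureReal_uIoo hμ (by positivity) fun x hx =>
      hfδ x ((abs_lt_abs_of_mem_uIoo_zero hx).trans_le (by rw [abs_div]; linarith [abs_nonneg t]))
  rw [integral_rho_sub_sub_integral_rho hint, hτμ, probReal_univ, one_mul, sub_self, mul_zero,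
    zero_add]
  calc f 0 / 8 * t ^ 2 = |t| / 2 * (f 0 / 2 * |t / 2 - 0|) := by
        rw [sub_zero, abs_div, abs_two, ← sq_abs t]; ring
    _ ≤ |t| / 2 * μ.real (uIoo 0 (t / 2)) := by gcongr
    _ ≤ _ := mul_measureReal_uIoo_le_integral_knightRemainder hint t

/-- Quadratic lower bound for the expected check loss near the quantile. -/
theorem expected_check_loss_quadratic_lower_bound (τ : ℝ) (hτ : τ ∈ Set.Ioo (0:ℝ) 1)
    (μ : Measure ℝ) [IsProbabilityMeasure μ] (f : ℝ → ℝ)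
    (hf_nonneg : ∀ x, 0 ≤ f x)
    (hμ : μ = volume.withDensity (fun x => ENNReal.ofReal (f x)))
    (hf_cont : ContinuousAt f 0) (hf_pos : 0 < f 0)
    (hint : Integrable (fun x : ℝ => x) μ)
    (hq : μ (Set.Iio 0) = ENNReal.ofReal τ) :
    ∃ c > (0:ℝ), ∃ δ > (0:ℝ), ∀ t : ℝ, |t| ≤ δ →
      c * t ^ 2 ≤ (∫ x, rho τ (x - t) ∂μ) - (∫ x, rho τ x ∂μ) :=
  expected_check_loss_quadratic_lower_bound_general τ hτ μ f hμ hf_cont hf_pos hint hq
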